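/- arXiv:2301.13172 — 2 statements merged into one kernel-verified Lean document; each statement's English description precedes it below -/
import Mathlib

section
/- Let θ := π/10 and set [m] := sin(mθ)/sin θ for m ∈ ℤ. Let M be the real 3×3 matrix M := (1/[2]^{3/2}) · [[ √([2][3]), √[4], √[4] ], [ √[4], √[2], √[2] ], [ √[4], √[2], √[2] ]], where √ is the real square root. Then M·M = [2]·M. -/
/-- Trigonometric quantum integer `[m] = sin(m·π/10)/sin(π/10)`,
i.e. `[m]_q` at `q = e^{2πi/20}`. -/
noncomputable def qi10 (m : ℤ) : ℝ :=
  Real.sin (m * (Real.pi / 10)) / Real.sin (Real.pi / 10)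

/-- The 3×3 block U^{b_i}_{b_{i+1}} of the exceptional cell system on
Γ^{4,6,⊂}. -/
noncomputable def Ubb : Matrix (Fin 3) (Fin 3) ℝ :=
  (1 / Real.sqrt (qi10 2 ^ 3)) •
    !![Real.sqrt (qi10 2 * qi10 3), Real.sqrt (qi10 4), Real.sqrt (qi10 4);
       Real.sqrt (qi10 4), Real.sqrt (qi10 2), Real.sqrt (qi10 2);
       Real.sqrt (qi10 4), Real.sqrt (qi10 2), Real.sqrt (qi10 2)]

/-!
The block is `[2]^{-3/2} A` with `A = [[a, b, b], [b, c, c], [b, c, c]]`, `a = √([2][3])`,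
`b = √[4]`, `c = √[2]`. The identity `[4]² = [2]²[3]` says `b² = ac`, so `A` has rank one and
`A² = tr(A) A`; the Hecke relation then reduces to `tr(A) = [2]^{5/2}`, i.e. to
`[4] + 2[2] = [2]³`, which holds for every `θ`. The identity `[4]² = [2]²[3]` follows from
`[4]² - [2]²[3] = [2]([6] - [4])`, valid for every `θ`, and the symmetry `[10 - m] = [m]`
at `θ = π/10`.
-/

open Real

namespace Matrix

def symBlock {R : Type*} (a b c : R) : Matrix (Fin 3) (Fin 3) R :=
  !![a, b, b; b, c, c; b, c, c]

theorem symBlock_mul_self {R : Type*} [CommRing R] {a b c : R} (h : b ^ 2 = a * c) :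
    symBlock a b c * symBlock a b c = (a + 2 * c) • symBlock a b c := by
  ext i j
  fin_cases i <;> fin_cases j <;>
    simp [symBlock, Matrix.mul_apply, Fin.sum_univ_three] <;> grind

end Matrix

noncomputable def qint (θ : ℝ) (m : ℤ) : ℝ :=
  sin (m * θ) / sin θ

namespace qint

variable {θ : ℝ}

theorem one_eq (hθ : sin θ ≠ 0) : qint θ 1 = 1 := by
  simp [qint, hθ]

theorem two_eq (hθ : sin θ ≠ 0) : qint θ 2 = 2 * cos θ := by
  rw [qint, Int.cast_ofNat, sin_two_mul]
  field_simp

theorem add_one (hθ : sin θ ≠ 0) (m : ℤ) :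
    qint θ (m + 1) = qint θ 2 * qint θ m - qint θ (m - 1) := by
  have hsum : sin ((m + 1) * θ) + sin ((m - 1) * θ) = 2 * sin (m * θ) * cos θ := by
    rw [two_mul_sin_mul_cos]; ring_nf
  rw [eq_sub_iff_add_eq, two_eq hθ, qint, qint, qint, ← add_div]
  push_cast
  rw [hsum]
  ring

theorem two_cube_eq (hθ : sin θ ≠ 0) : qint θ 2 ^ 3 = qint θ 4 + 2 * qint θ 2 := by
  have h3 := add_one hθ 2
  have h4 := add_one hθ 3
  norm_num [one_eq hθ] at h3 h4
  rw [h4, h3]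
  ring

theorem four_sq_sub (hθ : sin θ ≠ 0) :
    qint θ 4 ^ 2 - qint θ 2 ^ 2 * qint θ 3 = qint θ 2 * (qint θ 6 - qint θ 4) := by
  have h3 := add_one hθ 2
  have h4 := add_one hθ 3
  have h5 := add_one hθ 4
  have h6 := add_one hθ 5
  norm_num [one_eq hθ] at h3 h4 h5 h6
  rw [h6, h5, h4, h3]
  ring

theorem pos {m : ℤ} (hθ : 0 < θ) (hm : 0 < m) (hmθ : m * θ < π) : 0 < qint θ m := by
  have hθm : θ ≤ m * θ := le_mul_of_one_le_left hθ.le (by exact_mod_cast hm)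
  exact div_pos (sin_pos_of_pos_of_lt_pi (by positivity) hmθ)
    (sin_pos_of_pos_of_lt_pi hθ (hθm.trans_lt hmθ))

theorem sub_eq_of_mul_eq_pi {n : ℤ} (h : n * θ = π) (m : ℤ) : qint θ (n - m) = qint θ m := by
  rw [qint, Int.cast_sub, sub_mul, h, sin_pi_sub, qint]

end qint

theorem qi10_eq_qint : qi10 = qint (π / 10) := rfl

theorem sin_pi_div_ten_ne_zero : sin (π / 10) ≠ 0 :=
  (sin_pos_of_pos_of_lt_pi (by positivity) (by linarith [pi_pos])).ne'

theorem qi10_pos {m : ℤ} (h0 : 0 < m) (h10 : m < 10) : 0 < qi10 m := by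
  refine qint.pos (by positivity) h0 ?_
  have : (m : ℝ) < 10 := by exact_mod_cast h10
  nlinarith [pi_pos]

theorem qi10_two_cube : qi10 2 ^ 3 = qi10 4 + 2 * qi10 2 :=
  qint.two_cube_eq sin_pi_div_ten_ne_zero

theorem qi10_four_sq : qi10 4 ^ 2 = qi10 2 ^ 2 * qi10 3 := by
  rw [qi10_eq_qint]
  have h64 : qint (π / 10) 6 = qint (π / 10) 4 := by
    simpa using qint.sub_eq_of_mul_eq_pi (θ := π / 10) (n := 10) (by push_cast; ring) 4
  linear_combination qint.four_sq_sub sin_pi_div_ten_ne_zero + qint (π / 10) 2 * h64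

/-- The Hecke relation for the 3×3 block U^{b_i}_{b_{i+1}}. -/
theorem threeByThree_hecke_block : Ubb * Ubb = qi10 2 • Ubb := by
  set x := qi10 2
  have hx : 0 < x := qi10_pos (by norm_num) (by norm_num)
  have h4 : 0 < qi10 4 := qi10_pos (by norm_num) (by norm_num)
  set a := √(x * qi10 3)
  set b := √(qi10 4)
  set c := √x
  have hc : 0 < c := sqrt_pos.2 hx
  have hac : a * c = qi10 4 := by
    rw [← sqrt_mul' _ hx.le, show x * qi10 3 * x = qi10 4 ^ 2 by linear_combination -qi10_four_sq,
      sqrt_sq h4.le]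
  have hscale : √(x ^ 3) = x * c := by
    rw [pow_succ, sqrt_mul (sq_nonneg x), sqrt_sq hx.le]
  have htrace : a + 2 * c = x * (x * c) := by
    refine mul_right_cancel₀ hc.ne' ?_
    linear_combination hac + (2 - x ^ 2) * sq_sqrt hx.le - qi10_two_cube
  have hU : Ubb = (1 / (x * c)) • Matrix.symBlock a b c := by rw [Ubb, hscale]; rfl
  rw [hU, smul_mul_smul_comm, Matrix.symBlock_mul_self (by rw [sq_sqrt h4.le, hac]), smul_smul,
    smul_smul, htrace]
  congr 1
  field_simp
end

section
/- Let θ ∈ ℝ with sin θ ≠ 0, set [m] := sin(mθ)/sin θ for m ∈ ℤ, and assume [2] ≠ 0, [3] ≠ 0, [3] ≥ 0 and [2]·[4] ≥ 0. Then both real 2×2 matrices M₁ := (1/[2]) · [[ 1, √[3] ], [ √[3], [3] ]] and M₂ := (1/[3]) · [[ [4], √([2][4]) ], [ √([2][4]), [2] ]] satisfy Mᵢ·Mᵢ = [2]·Mᵢ. -/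
/-!
Each block is `(1 / c) • N` with `N` a 2×2 matrix of determinant zero, so Cayley–Hamilton gives
`N * N = (tr N) • N`, and the Hecke relation amounts to `tr N = c * [2]`. The traces are
`1 + [3] = [2]²` and `[4] + [2] = [3][2]`, both instances of the recursion
`[2][m] = [m-1] + [m+1]`.
-/

/-- Trigonometric quantum integer `[m] = sin(mθ)/sin θ`. -/
noncomputable def qit (θ : ℝ) (m : ℤ) : ℝ := Real.sin (m * θ) / Real.sin θ

open Real

theorem qit_one {θ : ℝ} (hθ : sin θ ≠ 0) : qit θ 1 = 1 := by
  simp [qit, hθ]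

theorem qit_two_mul (θ : ℝ) (m : ℤ) :
    qit θ 2 * qit θ m = qit θ (m - 1) + qit θ (m + 1) := by
  rcases eq_or_ne (sin θ) 0 with hθ | hθ
  · simp [qit, hθ]
  · simp only [qit]
    push_cast
    rw [sub_mul, add_mul, one_mul, sin_sub, sin_add, sin_two_mul]
    field_simp
    ring

theorem qit_two_sq {θ : ℝ} (hθ : sin θ ≠ 0) : qit θ 2 ^ 2 = 1 + qit θ 3 := by
  simpa [sq, qit_one hθ] using qit_two_mul θ 2

theorem qit_two_mul_qit_three (θ : ℝ) : qit θ 2 * qit θ 3 = qit θ 2 + qit θ 4 := by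
  simpa using qit_two_mul θ 3

theorem Matrix.mul_self_eq_trace_smul_of_det_eq_zero {R : Type*} [CommRing R]
    {A : Matrix (Fin 2) (Fin 2) R} (hA : A.det = 0) : A * A = A.trace • A := by
  rw [Matrix.det_fin_two] at hA
  ext i j
  fin_cases i <;> fin_cases j <;>
    simp only [Fin.zero_eta, Fin.mk_one, Fin.isValue, Matrix.mul_apply, Fin.sum_univ_two,
      Matrix.trace_fin_two, Matrix.smul_apply, smul_eq_mul]
  · linear_combination -hA
  · ring
  · ring
  · linear_combination -hA

theorem one_div_smul_mul_self_of_mul_self {K A : Type*} [Field K] [Ring A] [Algebra K A]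
    {c q : K} {x : A} (hx : x * x = (c * q) • x) :
    ((1 / c) • x) * ((1 / c) • x) = q • ((1 / c) • x) := by
  rw [smul_mul_smul_comm, hx, smul_smul, smul_smul, one_div]
  congr 1
  calc c⁻¹ * c⁻¹ * (c * q) = c⁻¹ * c⁻¹⁻¹ * c⁻¹ * q := by rw [inv_inv]; ring
    _ = q * c⁻¹ := by rw [mul_inv_mul_cancel, mul_comm]

theorem twoByTwo_hecke_blocks_general (θ : ℝ) (hθ : Real.sin θ ≠ 0)
    (h3pos : 0 ≤ qit θ 3)
    (h24 : 0 ≤ qit θ 2 * qit θ 4) :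
    (((1 / qit θ 2) • !![(1 : ℝ), Real.sqrt (qit θ 3);
                         Real.sqrt (qit θ 3), qit θ 3]) *
       ((1 / qit θ 2) • !![(1 : ℝ), Real.sqrt (qit θ 3);
                           Real.sqrt (qit θ 3), qit θ 3])
      = qit θ 2 • ((1 / qit θ 2) • !![(1 : ℝ), Real.sqrt (qit θ 3);
                                      Real.sqrt (qit θ 3), qit θ 3])) ∧
    (((1 / qit θ 3) • !![qit θ 4, Real.sqrt (qit θ 2 * qit θ 4);
                         Real.sqrt (qit θ 2 * qit θ 4), qit θ 2]) *
       ((1 / qit θ 3) • !![qit θ 4, Real.sqrt (qit θ 2 * qit θ 4);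
                           Real.sqrt (qit θ 2 * qit θ 4), qit θ 2])
      = qit θ 2 • ((1 / qit θ 3) • !![qit θ 4, Real.sqrt (qit θ 2 * qit θ 4);
                                      Real.sqrt (qit θ 2 * qit θ 4), qit θ 2])) := by
  refine ⟨one_div_smul_mul_self_of_mul_self ?_, one_div_smul_mul_self_of_mul_self ?_⟩
  · have hdet : Matrix.det !![(1 : ℝ), √(qit θ 3); √(qit θ 3), qit θ 3] = 0 := by
      rw [Matrix.det_fin_two_of, Real.mul_self_sqrt h3pos, one_mul, sub_self]
    rw [Matrix.mul_self_eq_trace_smul_of_det_eq_zero hdet, Matrix.trace_fin_two_of, ← sq,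
      qit_two_sq hθ]
  · have hdet : Matrix.det
        !![qit θ 4, √(qit θ 2 * qit θ 4); √(qit θ 2 * qit θ 4), qit θ 2] = 0 := by
      rw [Matrix.det_fin_two_of, Real.mul_self_sqrt h24, mul_comm, sub_self]
    rw [Matrix.mul_self_eq_trace_smul_of_det_eq_zero hdet, Matrix.trace_fin_two_of,
      mul_comm (qit θ 3), qit_two_mul_qit_three, add_comm]

/-- Both 2×2 blocks U^{b_i}_{d_i} and U^{c_i}_{c_{i+3}} satisfy the Hecke
relation M·M = [2]·M. -/
theorem twoByTwo_hecke_blocks (θ : ℝ) (hθ : Real.sin θ ≠ 0)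
    (h2 : qit θ 2 ≠ 0) (h3 : qit θ 3 ≠ 0) (h3pos : 0 ≤ qit θ 3)
    (h24 : 0 ≤ qit θ 2 * qit θ 4) :
    (((1 / qit θ 2) • !![(1 : ℝ), Real.sqrt (qit θ 3);
                         Real.sqrt (qit θ 3), qit θ 3]) *
       ((1 / qit θ 2) • !![(1 : ℝ), Real.sqrt (qit θ 3);
                           Real.sqrt (qit θ 3), qit θ 3])
      = qit θ 2 • ((1 / qit θ 2) • !![(1 : ℝ), Real.sqrt (qit θ 3);
                                      Real.sqrt (qit θ 3), qit θ 3])) ∧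
    (((1 / qit θ 3) • !![qit θ 4, Real.sqrt (qit θ 2 * qit θ 4);
                         Real.sqrt (qit θ 2 * qit θ 4), qit θ 2]) *
       ((1 / qit θ 3) • !![qit θ 4, Real.sqrt (qit θ 2 * qit θ 4);
                           Real.sqrt (qit θ 2 * qit θ 4), qit θ 2])
      = qit θ 2 • ((1 / qit θ 3) • !![qit θ 4, Real.sqrt (qit θ 2 * qit θ 4);
                                      Real.sqrt (qit θ 2 * qit θ 4), qit θ 2])) :=
  twoByTwo_hecke_blocks_general θ hθ h3pos h24
end
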